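/- Let a > 100 be an integer, let u₂ = s·ε^{x₂}·δ^{y₂} with s ∈ {1,-1} and integers x₂, y₂, and set X = max{|x₂|, |y₂|}. Then there exists τ ∈ Gal(K/ℚ) and integers x̄₂, ȳ₂ such that |τ(u₂)| = ε^{x̄₂}·δ^{ȳ₂} and either (a) x̄₂ = X and ȳ₂ ≥ -X, or (b) x̄₂ ≥ X/2 and ȳ₂ ≥ -X/2. -/

import Mathlib

/-!
`f_a` has no rational root (an integral one would divide `1`), so it is irreducible and is the
minimal polynomial of `ρ`. Since `-1 - 1/x` permutes its roots, `ρ ↦ -1 - ρ⁻¹` extends to an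
automorphism `σ` of `ℚ(ρ)`. Up to sign, `σ` maps `ε ↦ δ` and `δ ↦ (εδ)⁻¹`, so it acts on
the exponent vectors of `ε ^ x * δ ^ y` by the map `(x, y) ↦ (-y, x - y)` of order three, and
a direct case analysis shows that one of the three vectors in each orbit is of shape (a) or (b).
-/

open IntermediateField Polynomial

noncomputable def simplestCubic (a : ℤ) : ℚ[X] :=
  X ^ 3 - C (a : ℚ) * X ^ 2 - C ((a : ℚ) + 3) * X - 1

namespace simplestCubic

variable (a : ℤ)

theorem monic : (simplestCubic a).Monic := by
  unfold simplestCubic; monicity!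

theorem natDegree_eq : (simplestCubic a).natDegree = 3 := by
  unfold simplestCubic; compute_degree!

theorem aeval_eq {A : Type*} [CommRing A] [Algebra ℚ A] (x : A) :
    aeval x (simplestCubic a) = x ^ 3 - a * x ^ 2 - (a + 3) * x - 1 := by
  simp [simplestCubic, map_ofNat]

theorem roots_eq_zero : (simplestCubic a).roots = 0 := by
  refine Multiset.eq_zero_of_forall_notMem fun r hr => ?_
  have hr : r ^ 3 - a * r ^ 2 - (a + 3) * r - 1 = 0 := by
    rw [mem_roots (monic a).ne_zero, IsRoot.def, ← coe_aeval_eq_eval, aeval_eq] at hr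
    exact hr
  obtain ⟨n, rfl⟩ : ∃ n : ℤ, (n : ℚ) = r := by
    refine IsIntegrallyClosed.isIntegral_iff.mp
      ⟨(X ^ 3 - C a * X ^ 2 - C (a + 3) * X - 1 : ℤ[X]), ?_, ?_⟩
    · monicity!
    · simp only [eval₂_sub, eval₂_mul, eval₂_pow, eval₂_X, eval₂_C, eval₂_one]
      simp only [algebraMap_int_eq, eq_intCast]
      push_cast
      exact hr
  have hn : n * (n ^ 2 - a * n - (a + 3)) = 1 := by
    have : n ^ 3 - a * n ^ 2 - (a + 3) * n - 1 = 0 := by exact_mod_cast hr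
    linear_combination this
  rcases Int.eq_one_or_neg_one_of_mul_eq_one hn with rfl | rfl <;> omega

theorem irreducible : Irreducible (simplestCubic a) :=
  (irreducible_iff_roots_eq_zero_of_degree_le_three (by rw [natDegree_eq]; omega)
    (by rw [natDegree_eq])).mpr (roots_eq_zero a)

variable {a} {K : Type*} [Field K] [Algebra ℚ K] {x : K}

theorem ne_zero_of_aeval_eq_zero (hx : aeval x (simplestCubic a) = 0) : x ≠ 0 := by
  rintro rfl; simp [aeval_eq] at hx

theorem add_one_ne_zero_of_aeval_eq_zero (hx : aeval x (simplestCubic a) = 0) : x + 1 ≠ 0 := by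
  intro h
  rw [aeval_eq, eq_neg_of_add_eq_zero_left h] at hx
  exact one_ne_zero (by linear_combination hx : (1 : K) = 0)

theorem aeval_neg_one_sub_inv (hx : aeval x (simplestCubic a) = 0) :
    aeval (-1 - x⁻¹) (simplestCubic a) = 0 := by
  have hx0 := ne_zero_of_aeval_eq_zero hx
  rw [aeval_eq] at hx ⊢
  field_simp
  linear_combination hx

theorem minpoly_eq (hx : aeval x (simplestCubic a) = 0) : minpoly ℚ x = simplestCubic a :=
  (minpoly.eq_of_irreducible_of_monic (irreducible a) hx (monic a)).symm

end simplestCubic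

theorem IntermediateField.exists_algEquiv_gen_eq {F E : Type*} [Field F] [Field E] [Algebra F E]
    {α : E} (hα : IsIntegral F α) {β : F⟮α⟯} (hβ : aeval β (minpoly F α) = 0) :
    ∃ σ : F⟮α⟯ ≃ₐ[F] F⟮α⟯, σ (AdjoinSimple.gen F α) = β := by
  have := adjoin.finiteDimensional hα
  let φ := (algHomAdjoinIntegralEquiv F hα).symm
    ⟨β, mem_aroots.mpr ⟨minpoly.ne_zero hα, hβ⟩⟩
  exact ⟨AlgEquiv.ofBijective φ φ.bijective, algHomAdjoinIntegralEquiv_symm_apply_gen F hα _⟩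

/-- `ε ^ x * δ ^ y`, with `ε = t` and `δ = 1 + t⁻¹`. -/
def unitMonomial {K : Type*} [DivisionRing K] (t : K) (p : ℤ × ℤ) : K :=
  t ^ p.1 * (1 + t⁻¹) ^ p.2

theorem map_unitMonomial {K L F : Type*} [DivisionRing K] [DivisionRing L] [FunLike F K L]
    [RingHomClass F K L] (f : F) (t : K) (p : ℤ × ℤ) :
    f (unitMonomial t p) = unitMonomial (f t) p := by
  simp [unitMonomial, map_zpow₀]

theorem abs_neg_one_zpow_mul_unitMonomial {t : ℝ} (ht : 0 < t) (n : ℤ) (p : ℤ × ℤ) :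
    |(-1) ^ n * unitMonomial t p| = unitMonomial t p := by
  rw [abs_mul, abs_zpow, abs_neg, abs_one, one_zpow, one_mul, abs_of_pos]
  unfold unitMonomial
  positivity

def rotateExponents (p : ℤ × ℤ) : ℤ × ℤ := (-p.2, p.1 - p.2)

theorem unitMonomial_neg_one_sub_inv {K : Type*} [Field K] {t : K} (h0 : t ≠ 0) (h1 : t + 1 ≠ 0)
    (p : ℤ × ℤ) :
    unitMonomial (-1 - t⁻¹) p = (-1) ^ p.1 * unitMonomial t (rotateExponents p) := by
  have hδ : 1 + t⁻¹ = (t + 1) / t := by field_simp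
  have hδ0 : 1 + t⁻¹ ≠ 0 := hδ ▸ div_ne_zero h1 h0
  have hε : -1 - t⁻¹ = -1 * (1 + t⁻¹) := by ring
  have hεδ : 1 + (-1 * (1 + t⁻¹))⁻¹ = (t * (1 + t⁻¹))⁻¹ := by
    rw [hδ, mul_div_cancel₀ _ h0]
    field_simp
    ring
  rw [unitMonomial, unitMonomial, hε, hεδ, mul_zpow, inv_zpow', mul_zpow, rotateExponents]
  simp only [zpow_neg, zpow_sub₀ hδ0]
  ring

theorem exists_iterate_apply_eq_neg_one_zpow_mul_unitMonomial {K F : Type*} [Field K]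
    [FunLike F K K] [RingHomClass F K K] {σ : F} {t : K} (hσ : σ t = -1 - t⁻¹) (h0 : t ≠ 0)
    (h1 : t + 1 ≠ 0) (k : ℕ) (n : ℤ) (p : ℤ × ℤ) :
    ∃ m : ℤ, σ^[k] ((-1) ^ n * unitMonomial t p) =
      (-1) ^ m * unitMonomial t (rotateExponents^[k] p) := by
  induction k generalizing n p with
  | zero => exact ⟨n, rfl⟩
  | succ k ih =>
    obtain ⟨m, hm⟩ := ih (n + p.1) (rotateExponents p)
    refine ⟨m, ?_⟩
    rw [Function.iterate_succ_apply, Function.iterate_succ_apply, map_mul, map_zpow₀, map_neg,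
      map_one, map_unitMonomial, hσ, unitMonomial_neg_one_sub_inv h0 h1, ← mul_assoc,
      ← zpow_add₀ (neg_ne_zero.mpr one_ne_zero), hm]

/-- Alternatives (a) and (b) of the theorem, with `X = max |x₂| |y₂|`. -/
def ExponentsReduced (X : ℤ) (p : ℤ × ℤ) : Prop :=
  (p.1 = X ∧ -X ≤ p.2) ∨ (X ≤ 2 * p.1 ∧ -X ≤ 2 * p.2)

theorem exists_iterate_rotateExponents_reduced (p : ℤ × ℤ) :
    ∃ k : ℕ, ExponentsReduced (|p.1| ⊔ |p.2|) (rotateExponents^[k] p) := by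
  obtain ⟨x, y⟩ := p
  have : ExponentsReduced (|x| ⊔ |y|) (x, y) ∨
      ExponentsReduced (|x| ⊔ |y|) (rotateExponents (x, y)) ∨
      ExponentsReduced (|x| ⊔ |y|) (rotateExponents (rotateExponents (x, y))) := by
    simp only [ExponentsReduced, rotateExponents]
    have := abs_choice x
    have := abs_choice y
    have := max_choice |x| |y|
    have := le_max_left |x| |y|
    have := le_max_right |x| |y|
    omega
  rcases this with h | h | h
  · exact ⟨0, h⟩
  · exact ⟨1, h⟩
  · exact ⟨2, h⟩

theorem embedding_lemma_general (a : ℤ) (ha : 100 < a) (ρ : ℝ)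
    (hroot : ρ ^ 3 - (a : ℝ) * ρ ^ 2 - ((a : ℝ) + 3) * ρ - 1 = 0)
    (hρ₁ : (a : ℝ) + 1 < ρ)
    (s : ℝ) (hs : s = 1 ∨ s = -1) (x₂ y₂ : ℤ)
    (u₂ : ℚ⟮ρ⟯) (hu₂ : (u₂ : ℝ) = s * ρ ^ x₂ * (1 + ρ⁻¹) ^ y₂) :
    ∃ (τ : ℚ⟮ρ⟯ ≃ₐ[ℚ] ℚ⟮ρ⟯) (xbar ybar : ℤ),
      |((τ u₂ : ℚ⟮ρ⟯) : ℝ)| = ρ ^ xbar * (1 + ρ⁻¹) ^ ybar ∧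
      ((xbar = |x₂| ⊔ |y₂| ∧ -(|x₂| ⊔ |y₂|) ≤ ybar) ∨
        (|x₂| ⊔ |y₂| ≤ 2 * xbar ∧ -(|x₂| ⊔ |y₂|) ≤ 2 * ybar)) := by
  have hρ : 0 < ρ := by
    have : (100 : ℝ) < a := by exact_mod_cast ha
    linarith
  have hρroot : aeval ρ (simplestCubic a) = 0 := by rwa [simplestCubic.aeval_eq]
  have hminpoly := simplestCubic.minpoly_eq hρroot
  have hg : aeval (AdjoinSimple.gen ℚ ρ) (simplestCubic a) = 0 :=
    hminpoly ▸ aeval_gen_minpoly ℚ ρ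
  -- The ascription puts `σ` in the type of `τ`, whose `Algebra ℚ` instance is not `algebra'`.
  obtain ⟨σ, hσ⟩ : ∃ σ : ℚ⟮ρ⟯ ≃ₐ[ℚ] ℚ⟮ρ⟯,
      σ (AdjoinSimple.gen ℚ ρ) = -1 - (AdjoinSimple.gen ℚ ρ)⁻¹ :=
    exists_algEquiv_gen_eq ⟨_, simplestCubic.monic a, hρroot⟩
      (hminpoly ▸ simplestCubic.aeval_neg_one_sub_inv hg)
  obtain ⟨n, rfl⟩ : ∃ n : ℤ, s = (-1) ^ n :=
    hs.elim (fun h => ⟨0, by simp [h]⟩) (fun h => ⟨1, by simp [h]⟩)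
  have hu : u₂ = (-1) ^ n * unitMonomial (AdjoinSimple.gen ℚ ρ) (x₂, y₂) := by
    apply (algebraMap ℚ⟮ρ⟯ ℝ).injective
    rw [map_mul, map_zpow₀, map_neg, map_one, map_unitMonomial, AdjoinSimple.algebraMap_gen,
      unitMonomial, ← mul_assoc]
    exact hu₂
  obtain ⟨k, hk⟩ := exists_iterate_rotateExponents_reduced (x₂, y₂)
  obtain ⟨m, hm⟩ := exists_iterate_apply_eq_neg_one_zpow_mul_unitMonomial hσ
    (simplestCubic.ne_zero_of_aeval_eq_zero hg)
    (simplestCubic.add_one_ne_zero_of_aeval_eq_zero hg) k n (x₂, y₂)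
  refine ⟨σ ^ k, _, _, ?_, hk⟩
  change |algebraMap ℚ⟮ρ⟯ ℝ _| = _
  rw [AlgEquiv.coe_pow, hu, hm, map_mul, map_zpow₀, map_neg, map_one, map_unitMonomial,
    AdjoinSimple.algebraMap_gen, abs_neg_one_zpow_mul_unitMonomial hρ]
  rfl

/-- Let `a > 100` be an integer, `ρ = ρ₁` the largest real root of `f_a`
(so `a+1 < ρ < a+2`), `K = ℚ(ρ) ⊆ ℝ`, `ε = ρ` and `δ = 1 + 1/ρ`. If
`u₂ = s·ε^{x₂}·δ^{y₂}` with `s ∈ {1,-1}` and `X = max{|x₂|,|y₂|}`, then there is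
`τ ∈ Gal(K/ℚ)` and integers `x̄₂, ȳ₂` with `|τ(u₂)| = ε^{x̄₂}·δ^{ȳ₂}` and either
(a) `x̄₂ = X` and `ȳ₂ ≥ -X`, or (b) `x̄₂ ≥ X/2` and `ȳ₂ ≥ -X/2`. -/
theorem embedding_lemma (a : ℤ) (ha : 100 < a) (ρ : ℝ)
    (hroot : ρ ^ 3 - (a : ℝ) * ρ ^ 2 - ((a : ℝ) + 3) * ρ - 1 = 0)
    (hρ₁ : (a : ℝ) + 1 < ρ) (hρ₂ : ρ < (a : ℝ) + 2)
    (s : ℝ) (hs : s = 1 ∨ s = -1) (x₂ y₂ : ℤ)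
    (u₂ : ℚ⟮ρ⟯) (hu₂ : (u₂ : ℝ) = s * ρ ^ x₂ * (1 + ρ⁻¹) ^ y₂) :
    ∃ (τ : ℚ⟮ρ⟯ ≃ₐ[ℚ] ℚ⟮ρ⟯) (xbar ybar : ℤ),
      |((τ u₂ : ℚ⟮ρ⟯) : ℝ)| = ρ ^ xbar * (1 + ρ⁻¹) ^ ybar ∧
      ((xbar = |x₂| ⊔ |y₂| ∧ -(|x₂| ⊔ |y₂|) ≤ ybar) ∨
        (|x₂| ⊔ |y₂| ≤ 2 * xbar ∧ -(|x₂| ⊔ |y₂|) ≤ 2 * ybar)) :=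
  embedding_lemma_general a ha ρ hroot hρ₁ s hs x₂ y₂ u₂ hu₂
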